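/- Let H be an infinite-dimensional Hilbert space and (U_n) a sequence of unitary operators converging to 0 in the weak operator topology. If T is a bounded operator commuting with every U_n, then every λ in the spectrum of T lies in its essential spectrum; that is, sp(T) = sp_ess(T). -/

import Mathlib

/-!
Let `A = T - λ` have a quasi-inverse `S` modulo compact operators. Some compact operator acts as
the identity on `ker A`, and another on `(range A)ᗮ`, so both are finite-dimensional; they are
invariant under every `U n`, because `A` commutes with `U n` and with `star (U n) = (U n)⁻¹`.
On a finite-dimensional invariant subspace weak convergence is norm convergence, while
`‖U n x‖ = ‖x‖`; so both subspaces are trivial. Being injective and invertible modulo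
compacts, `A` is bounded below, so its range is closed as well as dense, and `A` is invertible.
-/

/-- The essential spectrum of a bounded operator: `λ` belongs to it iff `T - λ` is not
invertible modulo compact operators, i.e. iff the image of `T - λ` in the Calkin
algebra is not invertible. -/
def essSpec {H : Type*} [NormedAddCommGroup H] [NormedSpace ℂ H]
    (T : H →L[ℂ] H) : Set ℂ :=
  {z | ¬ ∃ S : H →L[ℂ] H,
    IsCompactOperator (⇑((T - algebraMap ℂ (H →L[ℂ] H) z) * S - 1)) ∧
    IsCompactOperator (⇑(S * (T - algebraMap ℂ (H →L[ℂ] H) z) - 1))}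

open Filter Topology Function

theorem Commute.mapsTo_ker {R M : Type*} [Semiring R] [AddCommMonoid M] [Module R M]
    [TopologicalSpace M] {A B : M →L[R] M} (h : Commute A B) :
    Set.MapsTo B (LinearMap.ker (A : M →ₗ[R] M)) (LinearMap.ker (A : M →ₗ[R] M)) :=
  fun x (hx : A x = 0) => show A (B x) = 0 by simpa [hx] using congr($(h.eq) x)

section CompactPerturbation

variable {𝕜 E : Type*} [NontriviallyNormedField 𝕜] [CompleteSpace 𝕜]
  [NormedAddCommGroup E] [NormedSpace 𝕜 E]

theorem Submodule.finiteDimensional_of_isCompactOperator_of_forall_apply_eq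
    {W : Submodule 𝕜 E} (hW : IsClosed (W : Set E)) {K : E → E} (hK : IsCompactOperator K)
    (hfix : ∀ x ∈ W, K x = x) : FiniteDimensional 𝕜 W := by
  have hKW : ∀ x : W, (K ∘ W.subtypeL) x ∈ W := fun x => by simp [hfix x x.2]
  have hid : Set.codRestrict (K ∘ W.subtypeL) W hKW = id :=
    funext fun x => Subtype.ext (hfix x x.2)
  exact .of_isCompactOperator_id (hid ▸ (hK.comp_clm W.subtypeL).codRestrict hKW hW)

theorem ContinuousLinearMap.finiteDimensional_ker_of_isCompactOperator_mul_sub_one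
    {A S : E →L[𝕜] E} (hSA : IsCompactOperator ⇑(S * A - 1)) :
    FiniteDimensional 𝕜 (LinearMap.ker (A : E →ₗ[𝕜] E)) :=
  Submodule.finiteDimensional_of_isCompactOperator_of_forall_apply_eq A.isClosed_ker hSA.neg
    fun x (hx : A x = 0) => by simp [hx]

end CompactPerturbation

section BoundedBelow

variable {𝕜 E F : Type*} [RCLike 𝕜] [NormedAddCommGroup E] [NormedSpace 𝕜 E]
  [NormedAddCommGroup F] [NormedSpace 𝕜 F]

theorem ContinuousLinearMap.exists_seq_norm_eq_one_tendsto_zero {A : E →L[𝕜] F}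
    (hA : ∀ c, ¬AntilipschitzWith c A) :
    ∃ u : ℕ → E, (∀ n, ‖u n‖ = 1) ∧ Tendsto (fun n => A (u n)) atTop (𝓝 0) := by
  have : ∀ n : ℕ, ∃ u : E, ‖u‖ = 1 ∧ ‖A u‖ ≤ 1 / (n + 1) := by
    intro n
    obtain ⟨x, hx⟩ : ∃ x, (n + 1 : NNReal) * ‖A x‖ < ‖x‖ := by
      by_contra! h
      exact hA _ (A.antilipschitz_of_bound h)
    have hx0 : x ≠ 0 := by
      rintro rfl
      simp at hx
    refine ⟨(‖x‖⁻¹ : 𝕜) • x, norm_smul_inv_norm hx0, ?_⟩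
    rw [map_smul, norm_smul, norm_inv, RCLike.norm_ofReal, abs_norm,
      inv_mul_le_iff₀ (norm_pos_iff.2 hx0), mul_one_div, le_div_iff₀ (by positivity)]
    push_cast at hx
    linarith
  choose u hu1 hu2 using this
  exact ⟨u, hu1, squeeze_zero_norm hu2 tendsto_one_div_add_atTop_nhds_zero_nat⟩

theorem ContinuousLinearMap.exists_antilipschitzWith_of_isCompactOperator_mul_sub_one
    {A S : E →L[𝕜] E} (hSA : IsCompactOperator ⇑(S * A - 1)) (hA : Injective A) :
    ∃ c, AntilipschitzWith c A := by
  by_contra! h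
  obtain ⟨u, hu1, hAu⟩ := A.exists_seq_norm_eq_one_tendsto_zero h
  obtain ⟨M, hM, hKM⟩ := hSA.image_closedBall_subset_compact 1
  obtain ⟨y, -, φ, hφ, hKu⟩ := hM.tendsto_subseq fun n => hKM ⟨u n, by simp [hu1], rfl⟩
  have hAuφ := hAu.comp hφ.tendsto_atTop
  -- `u = S (A u) - (S A - 1) u` converges along `φ`
  have hu : Tendsto (u ∘ φ) atTop (𝓝 (-y)) := by
    simpa [comp_def] using ((S.continuous.tendsto 0).comp hAuφ).sub hKu
  have hy : ‖-y‖ = 1 := tendsto_nhds_unique hu.norm (by simp [hu1])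
  have hAy : A (-y) = 0 := tendsto_nhds_unique ((A.continuous.tendsto _).comp hu) hAuφ
  simp [hA.eq_iff' (map_zero A) |>.1 hAy] at hy

end BoundedBelow

section Hilbert

variable {𝕜 H : Type*} [RCLike 𝕜] [NormedAddCommGroup H] [InnerProductSpace 𝕜 H]

theorem tendsto_zero_of_forall_inner_tendsto_zero [FiniteDimensional 𝕜 H] {ι : Type*}
    {l : Filter ι} {v : ι → H} (h : ∀ y, Tendsto (fun i => inner 𝕜 (v i) y) l (𝓝 0)) :
    Tendsto v l (𝓝 0) := by
  let b := stdOrthonormalBasis 𝕜 H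
  have hcoord : ∀ j, Tendsto (fun i => inner 𝕜 (b j) (v i)) l (𝓝 0) := fun j => by
    refine tendsto_zero_iff_norm_tendsto_zero.2 ?_
    exact (tendsto_zero_iff_norm_tendsto_zero.1 (h (b j))).congr fun i => norm_inner_symm _ _
  simpa only [b.sum_repr', zero_smul, Finset.sum_const_zero] using
    tendsto_finsetSum Finset.univ fun j _ => (hcoord j).smul_const (b j)

theorem Submodule.eq_bot_of_finiteDimensional_of_forall_mapsTo {U : ℕ → H → H}
    (hU : ∀ n x, ‖U n x‖ = ‖x‖)
    (hweak : ∀ x y, Tendsto (fun n => inner 𝕜 (U n x) y) atTop (𝓝 0))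
    (W : Submodule 𝕜 H) [FiniteDimensional 𝕜 W] (hW : ∀ n, Set.MapsTo (U n) W W) :
    W = ⊥ := by
  refine (Submodule.eq_bot_iff W).2 fun x hx => ?_
  let v : ℕ → W := fun n => ⟨U n x, hW n hx⟩
  have hv : Tendsto v atTop (𝓝 0) :=
    tendsto_zero_of_forall_inner_tendsto_zero fun y => hweak x y
  have : Tendsto (fun _ : ℕ => ‖x‖) atTop (𝓝 0) := by simpa [v, hU] using hv.norm
  exact norm_eq_zero.1 (tendsto_const_nhds_iff.1 this)

variable [CompleteSpace H]

theorem ContinuousLinearMap.finiteDimensional_orthogonal_range_of_isCompactOperator_mul_sub_one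
    {A S : H →L[𝕜] H} (hAS : IsCompactOperator ⇑(A * S - 1)) :
    FiniteDimensional 𝕜 (LinearMap.range (A : H →ₗ[𝕜] H))ᗮ := by
  set W := (LinearMap.range (A : H →ₗ[𝕜] H))ᗮ
  -- the projection onto `W` kills the range of `A`, so `-P (A S - 1)` is the identity on `W`
  refine Submodule.finiteDimensional_of_isCompactOperator_of_forall_apply_eq
    (Submodule.isClosed_orthogonal _) (hAS.continuous_comp W.starProjection.continuous).neg
    fun y hy => ?_
  have hPA : W.starProjection (A (S y)) = 0 :=
    (Submodule.starProjection_apply_eq_zero_iff W).2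
      (Submodule.le_orthogonal_orthogonal _ ⟨S y, rfl⟩)
  simp [hPA, Submodule.starProjection_eq_self_iff.2 hy]

theorem ContinuousLinearMap.isUnit_of_isCompactOperator_of_forall_commute
    {U : ℕ → H →L[𝕜] H} (hU : ∀ n, U n ∈ unitary (H →L[𝕜] H))
    (hweak : ∀ x y, Tendsto (fun n => inner 𝕜 (U n x) y) atTop (𝓝 0))
    {A S : H →L[𝕜] H} (hcomm : ∀ n, Commute A (U n))
    (hAS : IsCompactOperator ⇑(A * S - 1)) (hSA : IsCompactOperator ⇑(S * A - 1)) :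
    IsUnit A := by
  have hUnorm : ∀ n x, ‖U n x‖ = ‖x‖ := fun n => norm_map_of_mem_unitary (hU n)
  have hker : LinearMap.ker (A : H →ₗ[𝕜] H) = ⊥ := by
    have := A.finiteDimensional_ker_of_isCompactOperator_mul_sub_one hSA
    exact Submodule.eq_bot_of_finiteDimensional_of_forall_mapsTo hUnorm hweak _
      fun n => (hcomm n).mapsTo_ker
  have hcoker : (LinearMap.range (A : H →ₗ[𝕜] H))ᗮ = ⊥ := by
    have := A.finiteDimensional_orthogonal_range_of_isCompactOperator_mul_sub_one hAS
    refine Submodule.eq_bot_of_finiteDimensional_of_forall_mapsTo hUnorm hweak _ fun n => ?_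
    have hstar : Commute A (star (U n)) :=
      (hcomm n).units_inv_right (u := Unitary.toUnits ⟨U n, hU n⟩)
    rw [A.orthogonal_range, ← star_eq_adjoint]
    exact (commute_star_comm.2 hstar).mapsTo_ker
  rw [isUnit_iff_bijective, bijective_iff_dense_range_and_antilipschitz,
    Submodule.topologicalClosure_eq_top_iff]
  exact ⟨hcoker, A.exists_antilipschitzWith_of_isCompactOperator_mul_sub_one hSA
    (LinearMap.ker_eq_bot.1 hker)⟩

end Hilbert

theorem essSpec_subset_spectrum {H : Type*} [NormedAddCommGroup H] [NormedSpace ℂ H]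
    (T : H →L[ℂ] H) : essSpec T ⊆ spectrum ℂ T := by
  intro z hz
  rw [spectrum.mem_iff, ← IsUnit.neg_iff, neg_sub]
  rintro ⟨u, hu⟩
  exact hz ⟨↑u⁻¹, by simp [← hu, isCompactOperator_zero],
    by simp [← hu, isCompactOperator_zero]⟩

theorem stmt_19_general {H : Type*} [NormedAddCommGroup H] [InnerProductSpace ℂ H]
    [CompleteSpace H]
    (U : ℕ → (H →L[ℂ] H)) (hU : ∀ n, U n ∈ unitary (H →L[ℂ] H))
    (hweak : ∀ x y : H,
      Filter.Tendsto (fun n => (inner ℂ ((U n) x) y : ℂ)) Filter.atTop (nhds 0))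
    (T : H →L[ℂ] H) (hcomm : ∀ n, Commute T (U n)) :
    spectrum ℂ T = essSpec T := by
  refine (essSpec_subset_spectrum T).antisymm' fun z hz ⟨S, hAS, hSA⟩ => ?_
  have hcommz : ∀ n, Commute (T - algebraMap ℂ (H →L[ℂ] H) z) (U n) := fun n =>
    (hcomm n).sub_left (Algebra.commutes z (U n))
  rw [spectrum.mem_iff, ← IsUnit.neg_iff, neg_sub] at hz
  exact hz <|
    ContinuousLinearMap.isUnit_of_isCompactOperator_of_forall_commute hU hweak hcommz hAS hSA

/-- If `T` commutes with a sequence of unitaries converging weakly to `0` on an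
infinite-dimensional Hilbert space, then the spectrum of `T` is purely essential. -/
theorem stmt_19 {H : Type*} [NormedAddCommGroup H] [InnerProductSpace ℂ H]
    [CompleteSpace H] (hinf : ¬ FiniteDimensional ℂ H)
    (U : ℕ → (H →L[ℂ] H)) (hU : ∀ n, U n ∈ unitary (H →L[ℂ] H))
    (hweak : ∀ x y : H,
      Filter.Tendsto (fun n => (inner ℂ ((U n) x) y : ℂ)) Filter.atTop (nhds 0))
    (T : H →L[ℂ] H) (hcomm : ∀ n, Commute T (U n)) :
    spectrum ℂ T = essSpec T :=
  stmt_19_general U hU hweak T hcomm
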